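/- Let a, b ∈ F[t] with a pure (i.e., gcd(a, a*) = 1) and b odd (i.e., b* = −b). Then there exists x ∈ F[t] such that a x − a* x* = b. -/

import Mathlib

open Polynomial

/-- The involution of `F[t]` fixing `F` and sending `t ↦ -t`. -/
noncomputable def pstar {F : Type*} [Field F] (p : F[X]) : F[X] := p.comp (-X)

/-- The induced involution on matrices: transpose composed with entrywise `pstar`. -/
noncomputable def mstar {F : Type*} [Field F] {n : ℕ}
    (A : Matrix (Fin n) (Fin n) F[X]) : Matrix (Fin n) (Fin n) F[X] :=
  Matrix.of fun i j => pstar (A j i)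

/-- `A` and `B` are congruent if `B = S* A S` for some `S ∈ GL_n(F[t])`. -/
def MatCongruent {F : Type*} [Field F] {n : ℕ}
    (A B : Matrix (Fin n) (Fin n) F[X]) : Prop :=
  ∃ S : Matrix (Fin n) (Fin n) F[X], IsUnit S.det ∧ B = mstar S * A * S

section Involution

variable {R : Type*} [CommRing R] (σ : R →+* R)

/-- If `u a + v σa = 1`, then `x = ½ (u + σv) b` works: applying `σ` to the Bézout identity
gives `σu σa + σv a = 1`, and `a x - σa σx = ½ b (u a + v σa + σu σa + σv a) = b`. -/
theorem exists_mul_sub_map_mul_map_eq (hσ : ∀ r, σ (σ r) = r) (h2 : IsUnit (2 : R))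
    {a b : R} (ha : IsCoprime a (σ a)) (hb : σ b = -b) :
    ∃ x, a * x - σ a * σ x = b := by
  obtain ⟨u, v, huv⟩ := ha
  obtain ⟨w, hw⟩ := h2.exists_left_inv
  have huv' : σ u * σ a + σ v * a = 1 := by
    simpa only [map_add, map_mul, map_one, hσ] using congrArg σ huv
  have hσw : σ w = w := by
    have hw' : σ w * 2 = 1 := by simpa only [map_mul, map_ofNat, map_one] using congrArg σ hw
    linear_combination w * hw' - σ w * hw
  refine ⟨w * (u + σ v) * b, ?_⟩
  rw [map_mul, map_mul, map_add, hσ, hσw, hb]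
  linear_combination w * b * huv + w * b * huv' + b * hw

end Involution

theorem pstar_eq_compRingHom {F : Type*} [Field F] :
    (pstar : F[X] → F[X]) = compRingHom (-X) :=
  rfl

theorem pstar_pstar {F : Type*} [Field F] (p : F[X]) : pstar (pstar p) = p := by
  simp [pstar, comp_assoc]

theorem pure_solves_odd_general {F : Type*} [Field F]
    (h2 : (2 : F) ≠ 0) (a b : F[X])
    (ha : IsCoprime a (pstar a)) (hb : pstar b = -b) :
    ∃ x : F[X], a * x - pstar a * pstar x = b := by
  have h2X : IsUnit (2 : F[X]) := by
    simpa only [map_ofNat] using (isUnit_iff_ne_zero.mpr h2).map (C : F →+* F[X])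
  rw [pstar_eq_compRingHom] at ha hb ⊢
  exact exists_mul_sub_map_mul_map_eq _ pstar_pstar h2X ha hb

/-- If `a ∈ F[t]` is pure and `b` is odd, then `a x - a* x* = b` for some `x`. -/
theorem pure_solves_odd {F : Type*} [Field F] [IsAlgClosed F]
    (h2 : (2 : F) ≠ 0) (a b : F[X])
    (ha : IsCoprime a (pstar a)) (hb : pstar b = -b) :
    ∃ x : F[X], a * x - pstar a * pstar x = b :=
  pure_solves_odd_general h2 a b ha hb
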